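/- Finite iterates of the loop characteristic function: for every program C, expressions e, e′ and every n ∈ ℕ, Φ^{n+1}(λσ.0) = ∑_{k=0}^{n} ⟦(assume e; C)^k ; assume e′⟧ (equality of functions Σ → W(Σ), the sum taken pointwise), where Φ(f)(σ) = ⟦e⟧(σ)·f†(⟦C⟧(σ)) + ⟦e′⟧(σ)·η(σ), D⁰ = skip and D^{k+1} = D^k ; D. -/

import Mathlib

/-!
Unfolding `Φ` shows that `Φⁿ(λσ.0)` is the `n`-th partial sum of any sequence `S` with
`S₀(σ) = ⟦e′⟧(σ)·η(σ)` and `S_{k+1}(σ) = ⟦e⟧(σ)·S_k†(⟦C⟧(σ))`, because `f ↦ f†(m)` is additive.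
The terms `⟦(assume e; C)^k ; assume e′⟧` satisfy this recursion by the monad laws for `W`
(unit laws and associativity of `†`). Additivity and associativity of `†` come from Scott
continuity: infinite sums are directed suprema of finite sums, so they commute with `+`, with
scaling on either side, and with each other.
-/

open scoped Classical

universe u v

/-- A semiring that is simultaneously a complete lattice with bottom `0`, whose order
coincides with the natural (additive) order, and in which addition and multiplication
are Scott-continuous. -/
class OLSemiring (U : Type u) extends Semiring U, CompleteLattice U where
  bot_eq_zero : (⊥ : U) = 0
  le_iff_exists_add : ∀ a b : U, a ≤ b ↔ ∃ c, a + c = b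
  add_scott : ∀ (D : Set U), D.Nonempty → DirectedOn (· ≤ ·) D → ∀ y : U,
    sSup ((fun x => x + y) '' D) = sSup D + y
  mul_scott_right : ∀ (D : Set U), D.Nonempty → DirectedOn (· ≤ ·) D → ∀ y : U,
    sSup ((fun x => x * y) '' D) = sSup D * y
  mul_scott_left : ∀ (D : Set U), D.Nonempty → DirectedOn (· ≤ ·) D → ∀ y : U,
    sSup ((fun x => y * x) '' D) = y * sSup D

variable {U : Type u} [OLSemiring U]

/-- Infinite sum: supremum over finite subfamilies of finite sums. -/
noncomputable def wsum {I : Type v} (f : I → U) : U :=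
  ⨆ J : Finset I, ∑ i ∈ J, f i

/-- The unit of the weighting monad. -/
noncomputable def eta {X : Type u} (x : X) : X → U :=
  fun y => if y = x then 1 else 0

/-- Kleisli extension: `kext f m y = ∑_{x ∈ supp m} m x * f x y`. -/
noncomputable def kext {X Y : Type u} (f : X → Y → U) (m : X → U) : Y → U :=
  fun y => wsum (fun x : Function.support m => m x.1 * f x.1 y)

/-- Syntax of tests over primitive tests indexed by `TI`. -/
inductive TestExpr (TI : Type u) : Type u where
  | prim (t : TI)
  | tt
  | ff
  | and (b₁ b₂ : TestExpr TI)
  | or (b₁ b₂ : TestExpr TI)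
  | not (b : TestExpr TI)

/-- The set of states at which a test is true. -/
def testSet {St TI : Type u} (tsem : TI → Set St) : TestExpr TI → Set St
  | .prim t => tsem t
  | .tt => Set.univ
  | .ff => ∅
  | .and b₁ b₂ => testSet tsem b₁ ∩ testSet tsem b₂
  | .or b₁ b₂ => testSet tsem b₁ ∪ testSet tsem b₂
  | .not b => (testSet tsem b)ᶜ

/-- Expressions: a test or a weight. -/
inductive Expr (U : Type u) (TI : Type u) : Type u where
  | test (b : TestExpr TI)
  | wt (u : U)

/-- Evaluation of expressions into weights. -/
noncomputable def eeval {St TI : Type u} (tsem : TI → Set St) : Expr U TI → St → U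
  | .test b => fun σ => if σ ∈ testSet tsem b then 1 else 0
  | .wt u => fun _ => u

/-- Programs. -/
inductive Prog (U St TI Act : Type u) : Type u where
  | skip
  | seq (C₁ C₂ : Prog U St TI Act)
  | choice (C₁ C₂ : Prog U St TI Act)
  | assume (e : Expr U TI)
  | iter (C : Prog U St TI Act) (e e' : Expr U TI)
  | act (a : Act)

/-- The characteristic function of iteration. -/
noncomputable def Phi {St : Type u} (w w' : St → U) (g : St → St → U)
    (f : St → St → U) : St → St → U :=
  fun σ τ => w σ * kext f (g σ) τ + w' σ * eta σ τ

/-- Denotational semantics of programs. -/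
noncomputable def sem {St TI Act : Type u} (tsem : TI → Set St)
    (asem : Act → St → St → U) : Prog U St TI Act → St → St → U
  | .skip => fun σ => eta σ
  | .seq C₁ C₂ => fun σ => kext (sem tsem asem C₂) (sem tsem asem C₁ σ)
  | .choice C₁ C₂ => fun σ τ => sem tsem asem C₁ σ τ + sem tsem asem C₂ σ τ
  | .assume e => fun σ τ => eeval tsem e σ * eta σ τ
  | .iter C e e' =>
      ⨆ n : ℕ, (Phi (eeval tsem e) (eeval tsem e') (sem tsem asem C))^[n] (fun _ _ => 0)
  | .act a => asem a

/-- Outcome assertions. -/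
abbrev OA (U : Type u) (St : Type u) := Set (St → U)

/-- Binary outcome conjunction. -/
def oplus {St : Type u} (φ ψ : OA U St) : OA U St :=
  { m | ∃ m₁ ∈ φ, ∃ m₂ ∈ ψ, m = fun σ => m₁ σ + m₂ σ }

/-- Indexed outcome conjunction. -/
noncomputable def bigOplus {St T : Type u} (φ : T → OA U St) : OA U St :=
  { m | ∃ f : T → St → U, (∀ t, f t ∈ φ t) ∧ m = fun σ => wsum (fun t => f t σ) }

/-- Right scaling of an assertion by a weight. -/
def odotR {St : Type u} (φ : OA U St) (u : U) : OA U St :=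
  { m' | ∃ m ∈ φ, m' = fun σ => m σ * u }

/-- Left scaling of an assertion by a weight. -/
def odotL {St : Type u} (u : U) (φ : OA U St) : OA U St :=
  { m' | ∃ m ∈ φ, m' = fun σ => u * m σ }

/-- `φ ⊨ e = u` : the expression `e` evaluates to `u` on the support of every `m ∈ φ`. -/
def entailsEq {St TI : Type u} (tsem : TI → Set St) (φ : OA U St)
    (e : Expr U TI) (u : U) : Prop :=
  ∀ m ∈ φ, ∀ σ, m σ ≠ 0 → eeval tsem e σ = u

/-- Semantic validity of an outcome triple. -/
def valid {St TI Act : Type u} (tsem : TI → Set St) (asem : Act → St → St → U)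
    (φ : OA U St) (C : Prog U St TI Act) (ψ : OA U St) : Prop :=
  ∀ m ∈ φ, kext (sem tsem asem C) m ∈ ψ

/-- The family `ψ` of assertions converges to `ψlim`. -/
def convergesTo {St : Type u} (ψ : ℕ → OA U St) (ψlim : OA U St) : Prop :=
  ∀ ms : ℕ → St → U, (∀ n, ms n ∈ ψ n) → (fun σ => wsum (fun n => ms n σ)) ∈ ψlim

/-- The Outcome Logic proof system (with oracle axioms for valid atomic triples). -/
inductive Deriv {St TI Act : Type u} (tsem : TI → Set St) (asem : Act → St → St → U) :
    OA U St → Prog U St TI Act → OA U St → Prop where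
  | atom {φ ψ} (a : Act) :
      valid tsem asem φ (.act a) ψ → Deriv tsem asem φ (.act a) ψ
  | skip (φ) : Deriv tsem asem φ .skip φ
  | seq {φ ϑ ψ C₁ C₂} :
      Deriv tsem asem φ C₁ ϑ → Deriv tsem asem ϑ C₂ ψ →
      Deriv tsem asem φ (.seq C₁ C₂) ψ
  | plus {φ ψ₁ ψ₂ C₁ C₂} :
      Deriv tsem asem φ C₁ ψ₁ → Deriv tsem asem φ C₂ ψ₂ →
      Deriv tsem asem φ (.choice C₁ C₂) (oplus ψ₁ ψ₂)
  | assume {φ e u} :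
      entailsEq tsem φ e u → Deriv tsem asem φ (.assume e) (odotR φ u)
  | iter {C e e'} (φn ψn : ℕ → OA U St) (ψlim : OA U St) :
      convergesTo ψn ψlim →
      (∀ n, Deriv tsem asem (φn n) (.seq (.assume e) C) (φn (n + 1))) →
      (∀ n, Deriv tsem asem (φn n) (.assume e') (ψn n)) →
      Deriv tsem asem (φn 0) (.iter C e e') ψlim
  | false (C φ) : Deriv tsem asem ∅ C φ
  | true (C φ) : Deriv tsem asem φ C Set.univ
  | scale {φ ψ C} (u : U) :
      Deriv tsem asem φ C ψ → Deriv tsem asem (odotL u φ) C (odotL u ψ)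
  | disj {φ₁ φ₂ ψ₁ ψ₂ C} :
      Deriv tsem asem φ₁ C ψ₁ → Deriv tsem asem φ₂ C ψ₂ →
      Deriv tsem asem (φ₁ ∪ φ₂) C (ψ₁ ∪ ψ₂)
  | conj {φ₁ φ₂ ψ₁ ψ₂ C} :
      Deriv tsem asem φ₁ C ψ₁ → Deriv tsem asem φ₂ C ψ₂ →
      Deriv tsem asem (φ₁ ∩ φ₂) C (ψ₁ ∩ ψ₂)
  | choice {T : Type u} {C} (φ φ' : T → OA U St) :
      (∀ t, Deriv tsem asem (φ t) C (φ' t)) →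
      Deriv tsem asem (bigOplus φ) C (bigOplus φ')
  | exists_ {T : Type u} {C} (φ φ' : T → OA U St) :
      (∀ t, Deriv tsem asem (φ t) C (φ' t)) →
      Deriv tsem asem (⋃ t, φ t) C (⋃ t, φ' t)
  | conseq {φ φ' ψ ψ' C} :
      φ' ⊆ φ → Deriv tsem asem φ C ψ → ψ ⊆ ψ' →
      Deriv tsem asem φ' C ψ'

/-- `ppow C n` is the `n`-fold sequential composition `Cⁿ` (`C⁰ = skip`, `C^{n+1} = Cⁿ;C`). -/
def ppow {U St TI Act : Type u} (C : Prog U St TI Act) : ℕ → Prog U St TI Act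
  | 0 => .skip
  | n + 1 => .seq (ppow C n) C

namespace OLSemiring

instance : IsOrderedAddMonoid U where
  add_le_add_left _ _ h c := by
    obtain ⟨d, rfl⟩ := (le_iff_exists_add _ _).1 h
    exact (le_iff_exists_add _ _).2 ⟨d, add_right_comm _ c d⟩

instance : CanonicallyOrderedAdd U where
  exists_add_of_le h := ((le_iff_exists_add _ _).1 h).imp fun _ h => h.symm
  le_add_self a b := (le_iff_exists_add _ _).2 ⟨b, add_comm a b⟩
  le_self_add _ b := (le_iff_exists_add _ _).2 ⟨b, rfl⟩

variable {ι : Type*} [Preorder ι] [IsDirectedOrder ι] [Nonempty ι] {g : ι → U}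

theorem iSup_add_of_monotone (hg : Monotone g) (y : U) : (⨆ i, g i) + y = ⨆ i, g i + y := by
  have := add_scott _ (Set.range_nonempty g) (directedOn_range.2 hg.directed_le) y
  rwa [← Set.range_comp, sSup_range, sSup_range, eq_comm] at this

theorem mul_iSup_of_monotone (hg : Monotone g) (y : U) : y * (⨆ i, g i) = ⨆ i, y * g i := by
  have := mul_scott_left _ (Set.range_nonempty g) (directedOn_range.2 hg.directed_le) y
  rwa [← Set.range_comp, sSup_range, sSup_range, eq_comm] at this

theorem iSup_mul_of_monotone (hg : Monotone g) (y : U) : (⨆ i, g i) * y = ⨆ i, g i * y := by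
  have := mul_scott_right _ (Set.range_nonempty g) (directedOn_range.2 hg.directed_le) y
  rwa [← Set.range_comp, sSup_range, sSup_range, eq_comm] at this

theorem iSup_add_iSup_of_monotone {h : ι → U} (hg : Monotone g) (hh : Monotone h) :
    (⨆ i, g i) + (⨆ i, h i) = ⨆ i, g i + h i := by
  refine le_antisymm ?_ (iSup_le fun i => add_le_add (le_iSup g i) (le_iSup h i))
  rw [iSup_add_of_monotone hg]
  refine iSup_le fun i => ?_
  rw [add_comm, iSup_add_of_monotone hh]
  refine iSup_le fun j => ?_
  obtain ⟨k, hik, hjk⟩ := directed_of (· ≤ ·) i j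
  calc h j + g i ≤ g k + h k := by rw [add_comm]; exact add_le_add (hg hik) (hh hjk)
    _ ≤ ⨆ i, g i + h i := le_iSup (fun i => g i + h i) k

end OLSemiring

open OLSemiring

section WSum

variable {I J : Type*}

theorem le_wsum (f : I → U) (s : Finset I) : ∑ i ∈ s, f i ≤ wsum f :=
  le_iSup (fun s : Finset I => ∑ i ∈ s, f i) s

theorem wsum_le {f : I → U} {c : U} (h : ∀ s : Finset I, ∑ i ∈ s, f i ≤ c) : wsum f ≤ c :=
  iSup_le h

theorem wsum_mono {f g : I → U} (h : f ≤ g) : wsum f ≤ wsum g :=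
  iSup_mono fun _ => Finset.sum_le_sum fun i _ => h i

theorem monotone_finset_sum (f : I → U) : Monotone fun s : Finset I => ∑ i ∈ s, f i :=
  fun _ _ => Finset.sum_le_sum_of_subset

theorem wsum_zero : wsum (0 : I → U) = 0 := by
  simp [wsum]

theorem wsum_add (f g : I → U) : wsum (f + g) = wsum f + wsum g := by
  simp only [wsum, iSup_add_iSup_of_monotone (monotone_finset_sum f) (monotone_finset_sum g),
    Pi.add_apply, Finset.sum_add_distrib]

theorem mul_wsum (u : U) (f : I → U) : u * wsum f = wsum fun i => u * f i := by
  simp only [wsum, mul_iSup_of_monotone (monotone_finset_sum f), Finset.mul_sum]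

theorem wsum_mul (f : I → U) (u : U) : wsum f * u = wsum fun i => f i * u := by
  simp only [wsum, iSup_mul_of_monotone (monotone_finset_sum f), Finset.sum_mul]

theorem wsum_finset_sum (s : Finset J) (h : J → I → U) :
    (wsum fun i => ∑ j ∈ s, h j i) = ∑ j ∈ s, wsum (h j) := by
  rw [← Finset.sum_fn]
  exact map_sum (⟨⟨wsum, wsum_zero⟩, wsum_add⟩ : (I → U) →+ U) h s

theorem wsum_comm_le (h : I → J → U) :
    (wsum fun i => wsum (h i)) ≤ wsum fun j => wsum fun i => h i j :=
  wsum_le fun s => by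
    rw [← wsum_finset_sum]
    exact wsum_mono fun j => le_wsum (h · j) s

theorem wsum_comm (h : I → J → U) :
    (wsum fun i => wsum (h i)) = wsum fun j => wsum fun i => h i j :=
  le_antisymm (wsum_comm_le h) (wsum_comm_le fun j i => h i j)

theorem wsum_subtype_eq_of_support_subset {f : I → U} {s : Set I}
    (hs : Function.support f ⊆ s) : (wsum fun x : s => f x) = wsum f := by
  refine le_antisymm (wsum_le fun t => ?_) (wsum_le fun t => ?_)
  · exact (Finset.sum_map t (Function.Embedding.subtype _) f).symm.trans_le (le_wsum f _)
  · calc ∑ x ∈ t, f x = ∑ x ∈ t.filter (· ∈ s), f x :=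
          (Finset.sum_filter_of_ne fun x _ hx => hs hx).symm
      _ = ∑ x ∈ t.subtype (· ∈ s), f x := by rw [← Finset.subtype_map, Finset.sum_map]; rfl
      _ ≤ wsum fun x : s => f x := le_wsum _ _

theorem wsum_ite_eq (a : I) (c : I → U) : (wsum fun x => if x = a then c x else 0) = c a := by
  refine le_antisymm (wsum_le fun s => ?_)
    (by simpa using le_wsum (fun x => if x = a then c x else 0) {a})
  rw [Finset.sum_ite_eq']
  split_ifs
  exacts [le_rfl, zero_le]

end WSum

section Kext

variable {X Y Z : Type u}

theorem kext_apply (f : X → Y → U) (m : X → U) (y : Y) :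
    kext f m y = wsum fun x => m x * f x y :=
  wsum_subtype_eq_of_support_subset (f := fun x => m x * f x y) fun x hx hm =>
    hx (by simp [hm])

theorem kext_eta (f : X → Y → U) (x : X) : kext f (eta x) = f x := by
  funext y
  simp only [kext_apply, eta, ite_mul, one_mul, zero_mul]
  exact wsum_ite_eq x (f · y)

theorem kext_eta_self (m : X → U) : kext eta m = m := by
  funext y
  simp only [kext_apply, eta, mul_ite, mul_one, mul_zero, eq_comm (a := y)]
  exact wsum_ite_eq y m

theorem kext_kext (g : Y → Z → U) (f : X → Y → U) (m : X → U) :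
    kext g (kext f m) = kext (fun x => kext g (f x)) m := by
  funext z
  simp only [kext_apply, wsum_mul, mul_wsum, mul_assoc]
  exact wsum_comm _

theorem kext_const_mul (f : X → Y → U) (u : U) (m : X → U) :
    kext f (fun x => u * m x) = fun y => u * kext f m y := by
  funext y
  simp only [kext_apply, mul_wsum, mul_assoc]

theorem kext_finset_sum {K : Type*} (s : Finset K) (F : K → X → Y → U) (m : X → U) :
    kext (∑ k ∈ s, F k) m = ∑ k ∈ s, kext (F k) m := by
  funext y
  simp only [kext_apply, Finset.sum_apply, Finset.mul_sum, ← wsum_finset_sum]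

end Kext

theorem Phi_iterate_eq_sum_range {St : Type u} {w w' : St → U} {g : St → St → U}
    {S : ℕ → St → St → U} (h0 : ∀ σ τ, S 0 σ τ = w' σ * eta σ τ)
    (hsucc : ∀ k σ τ, S (k + 1) σ τ = w σ * kext (S k) (g σ) τ) (n : ℕ) :
    (Phi w w' g)^[n] (fun _ _ => 0) = ∑ k ∈ Finset.range n, S k := by
  induction n with
  | zero => rw [Finset.sum_range_zero]; rfl
  | succ n ih =>
    rw [Function.iterate_succ_apply', ih]
    funext σ τ
    simp only [Phi, kext_finset_sum, Finset.sum_apply, Finset.mul_sum, Finset.sum_range_succ',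
      h0, hsucc]

section Semantics

variable {St TI Act : Type u} (tsem : TI → Set St) (asem : Act → St → St → U)

theorem sem_ppow_succ' (D : Prog U St TI Act) (k : ℕ) (σ : St) :
    sem tsem asem (ppow D (k + 1)) σ = kext (sem tsem asem (ppow D k)) (sem tsem asem D σ) := by
  induction k generalizing σ with
  | zero => simp only [ppow, sem, kext_eta, kext_eta_self]
  | succ k ih =>
    change kext (sem tsem asem D) (sem tsem asem (ppow D (k + 1)) σ) = _
    rw [ih, kext_kext]
    rfl

theorem sem_seq_ppow_zero (D E : Prog U St TI Act) :
    sem tsem asem (.seq (ppow D 0) E) = sem tsem asem E :=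
  funext (kext_eta (sem tsem asem E))

theorem sem_seq_ppow_succ' (D E : Prog U St TI Act) (k : ℕ) (σ : St) :
    sem tsem asem (.seq (ppow D (k + 1)) E) σ
      = kext (sem tsem asem (.seq (ppow D k) E)) (sem tsem asem D σ) := by
  change kext _ (sem tsem asem (ppow D (k + 1)) σ) = _
  rw [sem_ppow_succ', kext_kext]
  rfl

theorem sem_assume_seq (e : Expr U TI) (C : Prog U St TI Act) (σ : St) :
    sem tsem asem (.seq (.assume e) C) σ = fun τ => eeval tsem e σ * sem tsem asem C σ τ := by
  change kext _ (fun τ => eeval tsem e σ * eta σ τ) = _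
  rw [kext_const_mul, kext_eta]

end Semantics

/-- **Finite iterates of the loop characteristic function**:
`Φ^{n+1}(λσ.0) = ∑_{k=0}^{n} ⟦(assume e; C)^k ; assume e′⟧`. -/
theorem phi_iterates_eq_partial_sums {U St TI Act : Type u} [OLSemiring U]
    (tsem : TI → Set St) (asem : Act → St → St → U)
    (C : Prog U St TI Act) (e e' : Expr U TI) (n : ℕ) :
    (Phi (eeval tsem e) (eeval tsem e') (sem tsem asem C))^[n + 1] (fun _ _ => (0 : U))
      = ∑ k ∈ Finset.range (n + 1),
          sem tsem asem (.seq (ppow (.seq (.assume e) C) k) (.assume e')) := by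
  refine Phi_iterate_eq_sum_range (fun σ τ => ?_) (fun k σ τ => ?_) (n + 1)
  · rw [sem_seq_ppow_zero]
    rfl
  · rw [sem_seq_ppow_succ', sem_assume_seq, kext_const_mul]
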